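/- arXiv:2302.12755 — 2 statements merged into one kernel-verified Lean document; each statement's English description precedes it below -/
import Mathlib

section
/- For every ε ≥ 1 and every M > 0 there exists a function φ ∈ BMO_ε([0,1]) such that ⟨exp|φ − ⟨φ⟩_{[0,1]}|⟩_{[0,1]} > M; that is, for ε ≥ 1 the supremum of ⟨exp|φ − ⟨φ⟩_I|⟩_I over φ ∈ BMO_ε(I) is +∞. -/
open MeasureTheory Real

/-- The average of `φ` over the interval `[a, b]`. -/
noncomputable def intervalAvg (a b : ℝ) (φ : ℝ → ℝ) : ℝ :=
  (b - a)⁻¹ * ∫ t in a..b, φ t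

/-- `φ` belongs to the `ε`-ball of `BMO([a,b])` (with the `L²`-based seminorm):
`φ` is in `L²([a,b])` and the mean square oscillation over every subinterval is at most `ε²`. -/
def MemBMO (ε a b : ℝ) (φ : ℝ → ℝ) : Prop :=
  MeasureTheory.IntegrableOn φ (Set.Icc a b) ∧
  MeasureTheory.IntegrableOn (fun t => (φ t) ^ 2) (Set.Icc a b) ∧
  ∀ c d : ℝ, a ≤ c → c < d → d ≤ b →
    intervalAvg c d (fun t => (φ t - intervalAvg c d φ) ^ 2) ≤ ε ^ 2

/-- The Bellman function `𝔹_ε(x₁, x₂)` for the symmetric integral John–Nirenberg inequality. -/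
noncomputable def bellman (ε x₁ x₂ : ℝ) : ℝ :=
  sSup { y : ℝ | ∃ φ : ℝ → ℝ, MemBMO ε 0 1 φ ∧
    intervalAvg 0 1 φ = x₁ ∧ intervalAvg 0 1 (fun t => (φ t) ^ 2) = x₂ ∧
    y = intervalAvg 0 1 (fun t => Real.exp |φ t|) }

/-! The truncations `φ_K = min K (-log)` of `-log` all lie in `BMO_1([0,1])`. The mean square
oscillation of `log` over `[c, d] ⊆ [0, 1]` is `1 - c d (log d - log c)² / (d - c)² ≤ 1`, and a
`1`-Lipschitz map such as the truncation cannot increase it, because the mean is the best constant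
approximation in `L²`. On the other hand `⟨φ_K⟩ ≤ ⟨-log⟩ = 1`, while on `[e^{-K}, 1]` the truncation
is inactive and `∫ e^{φ_K} ≥ ∫_{e^{-K}}^1 dt / t = K`, so `⟨exp |φ_K - ⟨φ_K⟩|⟩ ≥ e^{-1} K`. -/

open Set

noncomputable def meanSqOsc (c d : ℝ) (φ : ℝ → ℝ) : ℝ :=
  intervalAvg c d (fun t => (φ t - intervalAvg c d φ) ^ 2)

section MeanSqOsc

variable {ψ : ℝ → ℝ} {c d : ℝ}

lemma MemBMO.mono {ε ε' a b : ℝ} {φ : ℝ → ℝ} (h : MemBMO ε a b φ) (hε : 0 ≤ ε)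
    (hεε' : ε ≤ ε') : MemBMO ε' a b φ :=
  ⟨h.1, h.2.1, fun c d hac hcd hdb => (h.2.2 c d hac hcd hdb).trans (by gcongr)⟩

lemma IntervalIntegrable.sub_const_sq (hψ : IntervalIntegrable ψ volume c d)
    (hψ2 : IntervalIntegrable (fun t => ψ t ^ 2) volume c d) (β : ℝ) :
    IntervalIntegrable (fun t => (ψ t - β) ^ 2) volume c d := by
  convert (hψ2.sub (hψ.const_mul (2 * β))).add (intervalIntegrable_const (c := β ^ 2)) using 1
  funext t
  ring

lemma intervalAvg_sub_sq (hcd : c ≠ d) (hψ : IntervalIntegrable ψ volume c d)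
    (hψ2 : IntervalIntegrable (fun t => ψ t ^ 2) volume c d) (β : ℝ) :
    intervalAvg c d (fun t => (ψ t - β) ^ 2) =
      intervalAvg c d (fun t => ψ t ^ 2) - 2 * β * intervalAvg c d ψ + β ^ 2 := by
  have hL : d - c ≠ 0 := sub_ne_zero.2 hcd.symm
  have hexp : (fun t => (ψ t - β) ^ 2) = fun t => ψ t ^ 2 - 2 * β * ψ t + β ^ 2 := by
    funext t; ring
  simp only [intervalAvg, hexp]
  rw [intervalIntegral.integral_add (hψ2.sub (hψ.const_mul _)) intervalIntegrable_const,
    intervalIntegral.integral_sub hψ2 (hψ.const_mul _), intervalIntegral.integral_const_mul,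
    intervalIntegral.integral_const, smul_eq_mul]
  field_simp

lemma meanSqOsc_eq (hcd : c ≠ d) (hψ : IntervalIntegrable ψ volume c d)
    (hψ2 : IntervalIntegrable (fun t => ψ t ^ 2) volume c d) :
    meanSqOsc c d ψ = intervalAvg c d (fun t => ψ t ^ 2) - intervalAvg c d ψ ^ 2 := by
  rw [meanSqOsc, intervalAvg_sub_sq hcd hψ hψ2]
  ring

lemma meanSqOsc_le_intervalAvg_sub_sq (hcd : c ≠ d) (hψ : IntervalIntegrable ψ volume c d)
    (hψ2 : IntervalIntegrable (fun t => ψ t ^ 2) volume c d) (β : ℝ) :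
    meanSqOsc c d ψ ≤ intervalAvg c d (fun t => (ψ t - β) ^ 2) := by
  rw [meanSqOsc_eq hcd hψ hψ2, intervalAvg_sub_sq hcd hψ hψ2]
  nlinarith [sq_nonneg (intervalAvg c d ψ - β)]

lemma LipschitzWith.meanSqOsc_comp_le {f : ℝ → ℝ} (hf : LipschitzWith 1 f) (hcd : c < d)
    (hψ : IntervalIntegrable ψ volume c d)
    (hψ2 : IntervalIntegrable (fun t => ψ t ^ 2) volume c d)
    (hfψ : IntervalIntegrable (fun t => f (ψ t)) volume c d)
    (hfψ2 : IntervalIntegrable (fun t => f (ψ t) ^ 2) volume c d) :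
    meanSqOsc c d (fun t => f (ψ t)) ≤ meanSqOsc c d ψ := by
  set m := intervalAvg c d ψ
  have hpt : ∀ t, (f (ψ t) - f m) ^ 2 ≤ (ψ t - m) ^ 2 := fun t => by
    have := hf.dist_le_mul (ψ t) m
    rw [NNReal.coe_one, one_mul, Real.dist_eq, Real.dist_eq] at this
    exact sq_le_sq.2 this
  calc meanSqOsc c d (fun t => f (ψ t))
      ≤ intervalAvg c d (fun t => (f (ψ t) - f m) ^ 2) :=
        meanSqOsc_le_intervalAvg_sub_sq hcd.ne hfψ hfψ2 _
    _ ≤ meanSqOsc c d ψ := by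
        refine mul_le_mul_of_nonneg_left ?_ (inv_nonneg.2 (sub_nonneg.2 hcd.le))
        exact intervalIntegral.integral_mono_on hcd.le (hfψ.sub_const_sq hfψ2 _)
          (hψ.sub_const_sq hψ2 _) fun t _ => hpt t

end MeanSqOsc

section Log

variable {c d : ℝ}

lemma continuousOn_mul_log_sq : ContinuousOn (fun t : ℝ => t * log t ^ 2) (Ici 0) := by
  refine ((continuous_mul_log.comp continuous_sqrt).pow 2).continuousOn.const_smul (4 : ℝ)
    |>.congr fun t (ht : 0 ≤ t) => ?_
  simp only [Pi.smul_apply, Pi.pow_apply, Function.comp_apply, smul_eq_mul, mul_pow,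
    log_sqrt ht, sq_sqrt ht]
  ring

lemma hasDerivAt_mul_log_sq_sub {x : ℝ} (hx : x ≠ 0) :
    HasDerivAt (fun t => t * log t ^ 2 - 2 * (t * log t) + 2 * t) (log x ^ 2) x := by
  have h := (((hasDerivAt_id' x).mul ((hasDerivAt_log hx).pow 2)).sub
    ((hasDerivAt_mul_log hx).const_mul 2)).add ((hasDerivAt_id' x).const_mul 2)
  refine h.congr_deriv ?_
  simp only [Pi.pow_apply]
  field_simp
  ring

lemma continuousOn_log_sq_primitive (hc : 0 ≤ c) :
    ContinuousOn (fun t => t * log t ^ 2 - 2 * (t * log t) + 2 * t) (Icc c d) :=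
  ((continuousOn_mul_log_sq.mono fun _ ht => hc.trans ht.1).sub
    (continuous_mul_log.const_mul 2).continuousOn).add
      (continuous_const.mul continuous_id).continuousOn

lemma intervalIntegrable_log_sq (hc : 0 ≤ c) (hcd : c ≤ d) :
    IntervalIntegrable (fun t => log t ^ 2) volume c d :=
  (intervalIntegrable_iff_integrableOn_Ioc_of_le hcd).2
    (intervalIntegral.integrableOn_deriv_of_nonneg (continuousOn_log_sq_primitive hc)
      (fun _ hx => hasDerivAt_mul_log_sq_sub (hc.trans_lt hx.1).ne') fun _ _ => sq_nonneg _)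

lemma integral_log_sq (hc : 0 ≤ c) (hcd : c ≤ d) :
    ∫ t in c..d, log t ^ 2 =
      d * log d ^ 2 - 2 * (d * log d) + 2 * d - (c * log c ^ 2 - 2 * (c * log c) + 2 * c) :=
  intervalIntegral.integral_eq_sub_of_hasDerivAt_of_le hcd (continuousOn_log_sq_primitive hc)
    (fun _ hx => hasDerivAt_mul_log_sq_sub (hc.trans_lt hx.1).ne')
    (intervalIntegrable_log_sq hc hcd)

lemma meanSqOsc_log_le_one (hc : 0 ≤ c) (hcd : c < d) : meanSqOsc c d log ≤ 1 := by
  have hL : d - c ≠ 0 := sub_ne_zero.2 hcd.ne'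
  rw [meanSqOsc_eq hcd.ne intervalIntegral.intervalIntegrable_log'
    (intervalIntegrable_log_sq hc hcd.le)]
  simp only [intervalAvg, integral_log_sq hc hcd.le, integral_log]
  rw [← sub_nonneg]
  have key : 1 - ((d - c)⁻¹ * (d * log d ^ 2 - 2 * (d * log d) + 2 * d -
      (c * log c ^ 2 - 2 * (c * log c) + 2 * c)) -
      ((d - c)⁻¹ * (d * log d - c * log c - d + c)) ^ 2) =
      c * d * (log d - log c) ^ 2 / (d - c) ^ 2 := by
    field_simp
    ring
  rw [key]
  exact div_nonneg (mul_nonneg (mul_nonneg hc (hc.trans hcd.le)) (sq_nonneg _)) (sq_nonneg _)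

end Log

noncomputable def truncNegLog (K t : ℝ) : ℝ := min K (-log t)

section TruncNegLog

variable {K : ℝ}

lemma truncNegLog_mem_Icc (hK : 0 ≤ K) {t : ℝ} (ht : t ∈ Icc (0 : ℝ) 1) :
    truncNegLog K t ∈ Icc 0 K :=
  ⟨le_min hK (neg_nonneg.2 (log_nonpos ht.1 ht.2)), min_le_left _ _⟩

lemma integrableOn_comp_truncNegLog (hK : 0 ≤ K) {g : ℝ → ℝ} (hg : Continuous g) :
    IntegrableOn (fun t => g (truncNegLog K t)) (Icc 0 1) := by
  obtain ⟨C, hC⟩ := isCompact_Icc.exists_bound_of_continuousOn (hg.continuousOn (s := Icc 0 K))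
  have hmeas : Measurable (truncNegLog K) := measurable_const.min measurable_log.neg
  refine Measure.integrableOn_of_bounded (M := C) measure_Icc_lt_top.ne
    (hg.measurable.comp hmeas).aestronglyMeasurable ?_
  filter_upwards [ae_restrict_mem measurableSet_Icc] with t ht
  exact hC _ (truncNegLog_mem_Icc hK ht)

lemma intervalIntegrable_comp_truncNegLog (hK : 0 ≤ K) {g : ℝ → ℝ} (hg : Continuous g)
    {c d : ℝ} (hc : c ∈ Icc (0 : ℝ) 1) (hd : d ∈ Icc (0 : ℝ) 1) :
    IntervalIntegrable (fun t => g (truncNegLog K t)) volume c d :=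
  ((integrableOn_comp_truncNegLog hK hg).mono_set (uIcc_subset_Icc hc hd)).intervalIntegrable

lemma memBMO_truncNegLog (hK : 0 ≤ K) : MemBMO 1 0 1 (truncNegLog K) := by
  refine ⟨integrableOn_comp_truncNegLog hK continuous_id,
    integrableOn_comp_truncNegLog hK (continuous_pow 2), fun c d hc hcd hd => ?_⟩
  have hcI : c ∈ Icc (0 : ℝ) 1 := ⟨hc, hcd.le.trans hd⟩
  have hdI : d ∈ Icc (0 : ℝ) 1 := ⟨hc.trans hcd.le, hd⟩
  have hlip : LipschitzWith 1 fun x : ℝ => min K (-x) := LipschitzWith.id.neg.const_min K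
  calc meanSqOsc c d (fun t => min K (-log t))
      ≤ meanSqOsc c d log :=
        hlip.meanSqOsc_comp_le hcd intervalIntegral.intervalIntegrable_log'
          (intervalIntegrable_log_sq hc hcd.le)
          (intervalIntegrable_comp_truncNegLog hK continuous_id hcI hdI)
          (intervalIntegrable_comp_truncNegLog hK (continuous_pow 2) hcI hdI)
    _ ≤ 1 ^ 2 := by rw [one_pow]; exact meanSqOsc_log_le_one hc hcd

lemma intervalAvg_truncNegLog_le_one (hK : 0 ≤ K) : intervalAvg 0 1 (truncNegLog K) ≤ 1 := by
  have hI := intervalIntegrable_comp_truncNegLog hK continuous_id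
    (left_mem_Icc.2 zero_le_one) (right_mem_Icc.2 zero_le_one)
  calc intervalAvg 0 1 (truncNegLog K) = ∫ t in (0 : ℝ)..1, truncNegLog K t := by
        simp [intervalAvg]
    _ ≤ ∫ t in (0 : ℝ)..1, -log t :=
        intervalIntegral.integral_mono_on zero_le_one hI
          intervalIntegral.intervalIntegrable_log'.neg fun _ _ => min_le_right _ _
    _ = 1 := by simp [intervalIntegral.integral_neg]

lemma le_integral_exp_truncNegLog (hK : 0 ≤ K) :
    K ≤ ∫ t in (0 : ℝ)..1, exp (truncNegLog K t) := by
  set r := exp (-K)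
  have hr : r ∈ Icc (0 : ℝ) 1 := ⟨(exp_pos _).le, exp_le_one_iff.2 (neg_nonpos.2 hK)⟩
  have h0 : (0 : ℝ) ∈ Icc (0 : ℝ) 1 := left_mem_Icc.2 zero_le_one
  have h1 : (1 : ℝ) ∈ Icc (0 : ℝ) 1 := right_mem_Icc.2 zero_le_one
  have htail : ∫ t in r..1, exp (truncNegLog K t) = K := by
    rw [intervalIntegral.integral_congr (g := fun t => t⁻¹), integral_inv]
    · rw [one_div, log_inv, log_exp, neg_neg]
    · rw [uIcc_of_le hr.2]
      exact fun h => (exp_pos _).not_ge h.1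
    · intro t ht
      rw [uIcc_of_le hr.2] at ht
      have ht0 : 0 < t := (exp_pos _).trans_le ht.1
      have hlog : -K ≤ log t := by simpa [r] using log_le_log (exp_pos _) ht.1
      simp only [truncNegLog, min_eq_right (neg_le.1 hlog), exp_neg, exp_log ht0]
  have hhead : 0 ≤ ∫ t in (0 : ℝ)..r, exp (truncNegLog K t) :=
    intervalIntegral.integral_nonneg hr.1 fun _ _ => (exp_pos _).le
  rw [← intervalIntegral.integral_add_adjacent_intervals
    (intervalIntegrable_comp_truncNegLog hK continuous_exp h0 hr)
    (intervalIntegrable_comp_truncNegLog hK continuous_exp hr h1), htail]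
  linarith

lemma exp_neg_one_mul_le_intervalAvg_exp_abs_truncNegLog (hK : 0 ≤ K) :
    exp (-1) * K ≤
      intervalAvg 0 1 (fun t => exp |truncNegLog K t - intervalAvg 0 1 (truncNegLog K)|) := by
  set a := intervalAvg 0 1 (truncNegLog K)
  have h0 : (0 : ℝ) ∈ Icc (0 : ℝ) 1 := left_mem_Icc.2 zero_le_one
  have h1 : (1 : ℝ) ∈ Icc (0 : ℝ) 1 := right_mem_Icc.2 zero_le_one
  calc exp (-1) * K ≤ exp (-a) * ∫ t in (0 : ℝ)..1, exp (truncNegLog K t) :=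
        mul_le_mul (exp_le_exp.2 (neg_le_neg (intervalAvg_truncNegLog_le_one hK)))
          (le_integral_exp_truncNegLog hK) hK (exp_pos _).le
    _ = ∫ t in (0 : ℝ)..1, exp (truncNegLog K t - a) := by
        rw [← intervalIntegral.integral_const_mul]
        simp only [exp_sub, exp_neg, div_eq_inv_mul]
    _ ≤ ∫ t in (0 : ℝ)..1, exp |truncNegLog K t - a| :=
        intervalIntegral.integral_mono_on zero_le_one
          (intervalIntegrable_comp_truncNegLog hK
            (continuous_exp.comp (continuous_sub_right a)) h0 h1)
          (intervalIntegrable_comp_truncNegLog hK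
            (continuous_exp.comp (continuous_sub_right a).abs) h0 h1)
          fun t _ => exp_le_exp.2 (le_abs_self _)
    _ = intervalAvg 0 1 (fun t => exp |truncNegLog K t - a|) := by simp [intervalAvg]

end TruncNegLog

/-- For `ε ≥ 1` the supremum of `⟨exp|φ − ⟨φ⟩|⟩` over `φ ∈ BMO_ε([0,1])`
is infinite: for every `M > 0` there is `φ ∈ BMO_ε([0,1])` with
`⟨exp|φ − ⟨φ⟩|⟩ > M`. -/
theorem symmetric_JN_blowup (ε : ℝ) (hε : 1 ≤ ε) (M : ℝ) (hM : 0 < M) :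
    ∃ φ : ℝ → ℝ, MemBMO ε 0 1 φ ∧
      M < intervalAvg 0 1 (fun t => Real.exp |φ t - intervalAvg 0 1 φ|) := by
  have hK : 0 ≤ 3 * M := by positivity
  refine ⟨truncNegLog (3 * M), (memBMO_truncNegLog hK).mono zero_le_one hε, ?_⟩
  have he : exp 1 < 3 := exp_one_lt_d9.trans (by norm_num)
  calc M < exp (-1) * (3 * M) := by
        rw [exp_neg, ← div_eq_inv_mul, lt_div_iff₀ (exp_pos 1)]
        nlinarith
    _ ≤ _ := exp_neg_one_mul_le_intervalAvg_exp_abs_truncNegLog hK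
end

section
/- Let ε > 0 and let (x₁, x₂) satisfy 0 < x₂ ≤ ε² and x₁² ≤ x₂. Define φ : [0,1] → ℝ by φ(t) = √x₂ for 0 ≤ t ≤ (x₁ + √x₂)/(2√x₂) and φ(t) = −√x₂ otherwise. Then φ ∈ BMO_ε([0,1]), ⟨φ⟩_{[0,1]} = x₁, ⟨φ²⟩_{[0,1]} = x₂, and ⟨e^{|φ|}⟩_{[0,1]} = e^{√x₂}. -/
open MeasureTheory Real

/-! `φ` takes only the values `±√x₂`, so `φ² ≡ x₂` and `e^|φ| ≡ e^√x₂`, and the jump point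
`p = (x₁ + √x₂) / (2√x₂) ∈ [0, 1]` makes the mean `p√x₂ - (1 - p)√x₂ = x₁`. The mean square
oscillation over a subinterval `J` is `⟨φ²⟩_J - ⟨φ⟩_J² ≤ ‖φ‖_∞² = x₂ ≤ ε²`. -/

theorem intervalAvg_const {a b : ℝ} (hab : a ≠ b) (c : ℝ) : intervalAvg a b (fun _ => c) = c := by
  rw [intervalAvg, intervalIntegral.integral_const, smul_eq_mul, ← mul_assoc,
    inv_mul_cancel₀ (sub_ne_zero.2 hab.symm), one_mul]

theorem intervalAvg_sub_intervalAvg_sq {φ : ℝ → ℝ} {c d : ℝ} (hcd : c ≠ d)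
    (hφ : IntervalIntegrable φ volume c d)
    (hφ2 : IntervalIntegrable (fun t => φ t ^ 2) volume c d) :
    intervalAvg c d (fun t => (φ t - intervalAvg c d φ) ^ 2)
      = intervalAvg c d (fun t => φ t ^ 2) - intervalAvg c d φ ^ 2 := by
  set m := intervalAvg c d φ with hm
  have hexpand : ∫ t in c..d, (φ t - m) ^ 2
      = (∫ t in c..d, φ t ^ 2) - 2 * m * (∫ t in c..d, φ t) + (d - c) * m ^ 2 := by
    simp_rw [sub_sq]
    rw [intervalIntegral.integral_add (hφ2.sub ((hφ.const_mul _).mul_const _))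
        intervalIntegrable_const,
      intervalIntegral.integral_sub hφ2 ((hφ.const_mul _).mul_const _),
      intervalIntegral.integral_mul_const, intervalIntegral.integral_const_mul,
      intervalIntegral.integral_const, smul_eq_mul]
    ring
  have hδ : d - c ≠ 0 := sub_ne_zero.2 hcd.symm
  rw [intervalAvg, hexpand, intervalAvg, hm, intervalAvg]
  field_simp
  ring

theorem memBMO_of_abs_le {ε a b : ℝ} {φ : ℝ → ℝ} (hφ : Measurable φ) (hb : ∀ t, |φ t| ≤ ε) :
    MemBMO ε a b φ := by
  have hsq : ∀ t, φ t ^ 2 ≤ ε ^ 2 := fun t =>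
    sq_abs (φ t) ▸ pow_le_pow_left₀ (abs_nonneg _) (hb t) 2
  have hint : ∀ c d : ℝ, IntegrableOn φ (Set.Icc c d) :=
    fun c d => Measure.integrableOn_of_bounded measure_Icc_lt_top.ne hφ.aestronglyMeasurable
      (ae_of_all _ fun t => (norm_eq_abs (φ t)).trans_le (hb t))
  have hint2 : ∀ c d : ℝ, IntegrableOn (fun t => φ t ^ 2) (Set.Icc c d) :=
    fun c d => Measure.integrableOn_of_bounded measure_Icc_lt_top.ne
      (hφ.pow_const 2).aestronglyMeasurable
      (ae_of_all _ fun t => by simpa [norm_eq_abs, abs_of_nonneg (sq_nonneg (φ t))] using hsq t)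
  refine ⟨hint a b, hint2 a b, fun c d _ hcd _ => ?_⟩
  rw [intervalAvg_sub_intervalAvg_sq hcd.ne (hint _ _).intervalIntegrable
    (hint2 _ _).intervalIntegrable]
  have hmean_sq : intervalAvg c d (fun t => φ t ^ 2) ≤ ε ^ 2 := by
    calc intervalAvg c d (fun t => φ t ^ 2)
        ≤ intervalAvg c d (fun _ => ε ^ 2) := by
          unfold intervalAvg
          gcongr
          exact intervalIntegral.integral_mono_on hcd.le (hint2 _ _).intervalIntegrable
              intervalIntegrable_const fun t _ => hsq t
      _ = ε ^ 2 := intervalAvg_const hcd.ne _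
  nlinarith [sq_nonneg (intervalAvg c d φ)]

theorem integral_ite_le {a p b : ℝ} (hap : a ≤ p) (hpb : p ≤ b) (u v : ℝ) :
    ∫ t in a..b, (if t ≤ p then u else v) = (p - a) * u + (b - p) * v := by
  have hleft : ∀ t ∈ Set.uIoc a p, (if t ≤ p then u else v) = u := fun t ht => by
    rw [Set.uIoc_of_le hap] at ht; exact if_pos ht.2
  have hright : ∀ t ∈ Set.uIoc p b, (if t ≤ p then u else v) = v := fun t ht => by
    rw [Set.uIoc_of_le hpb] at ht; exact if_neg (not_le.2 ht.1)
  have hint_left : IntervalIntegrable (fun t => if t ≤ p then u else v) volume a p :=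
    (intervalIntegrable_const (c := u)).congr_ae
      ((ae_restrict_mem measurableSet_uIoc).mono fun t ht => (hleft t ht).symm)
  have hint_right : IntervalIntegrable (fun t => if t ≤ p then u else v) volume p b :=
    (intervalIntegrable_const (c := v)).congr_ae
      ((ae_restrict_mem measurableSet_uIoc).mono fun t ht => (hright t ht).symm)
  rw [← intervalIntegral.integral_add_adjacent_intervals hint_left hint_right,
    intervalIntegral.integral_congr_ae (ae_of_all _ hleft),
    intervalIntegral.integral_congr_ae (ae_of_all _ hright),
    intervalIntegral.integral_const, intervalIntegral.integral_const, smul_eq_mul, smul_eq_mul]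

/-- The two-valued optimizer on the region `Ω¹_ε`. -/
theorem optimizer_omega1 (ε x₁ x₂ : ℝ) (hε0 : 0 < ε)
    (h0 : 0 < x₂) (h1 : x₂ ≤ ε ^ 2) (h2 : x₁ ^ 2 ≤ x₂)
    (φ : ℝ → ℝ)
    (hφ : ∀ t : ℝ, φ t =
      if t ≤ (x₁ + Real.sqrt x₂) / (2 * Real.sqrt x₂) then Real.sqrt x₂
      else -Real.sqrt x₂) :
    MemBMO ε 0 1 φ ∧
      intervalAvg 0 1 φ = x₁ ∧ intervalAvg 0 1 (fun t => (φ t) ^ 2) = x₂ ∧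
      intervalAvg 0 1 (fun t => Real.exp |φ t|) = Real.exp (Real.sqrt x₂) := by
  set s := √x₂ with hs_def
  have hs : 0 < s := sqrt_pos.2 h0
  have hsε : s ≤ ε := sqrt_le_iff.2 ⟨hε0.le, h1⟩
  have hx₁ : |x₁| ≤ s := abs_le_sqrt h2
  set p := (x₁ + s) / (2 * s) with hp_def
  have hp0 : 0 ≤ p := div_nonneg (by linarith [abs_le.1 hx₁]) (by linarith)
  have hp1 : p ≤ 1 := (div_le_one (by linarith)).2 (by linarith [abs_le.1 hx₁])
  obtain rfl : φ = fun t => if t ≤ p then s else -s := funext hφ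
  have habs : ∀ t, |(if t ≤ p then s else -s)| = s := fun t => by
    split_ifs <;> simp [abs_of_pos hs]
  have hsq : ∀ t, (if t ≤ p then s else -s) ^ 2 = x₂ := fun t => by
    split_ifs <;> simp [hs_def, sq_sqrt h0.le]
  refine ⟨memBMO_of_abs_le (measurable_const.ite measurableSet_Iic measurable_const)
      fun t => (habs t).trans_le hsε, ?_, ?_, ?_⟩
  · rw [intervalAvg, integral_ite_le hp0 hp1, hp_def]
    field_simp
    ring
  · simp_rw [hsq]; exact intervalAvg_const zero_ne_one _
  · simp_rw [habs]; exact intervalAvg_const zero_ne_one _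
end
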